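/- Soundness of GenGammaPath: for every n ≥ 0 and every array t = (t_0,…,t_n) of nonnegative integers with t_0 > 0, the output word w_n of GenGammaPath(t) satisfies w_n·b ∈ F_γ (i.e., w_n is a Dyck word and w_n·b is a fixed point of γ). -/
import Mathlib


/-- The two-letter alphabet {a, b}. -/
inductive Letter : Type
  | a : Letter
  | b : Letter
deriving DecidableEq, BEq, Repr

/-- Words over the alphabet {a, b}. -/
abbrev Word := List Letter

/-- δ(w) = |w|_a − |w|_b. -/
def delta (w : Word) : ℤ := (w.count Letter.a : ℤ) - (w.count Letter.b : ℤ)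

/-- A Dyck word: δ(w) = 0 and δ(p) ≥ 0 for every prefix p of w. -/
def IsDyck (w : Word) : Prop := delta w = 0 ∧ ∀ p : Word, p <+: w → 0 ≤ delta p

/-- Membership in D_n: w = d·b with d a Dyck word of length 2n. -/
def InD (n : ℕ) (w : Word) : Prop :=
  ∃ d : Word, IsDyck d ∧ d.length = 2 * n ∧ w = d ++ [Letter.b]

/-- Exchanging the letters a and b. -/
def Letter.flip : Letter → Letter
  | .a => .b
  | .b => .a

/-- The complement w̄ of a word w. -/
def comp (w : Word) : Word := w.map Letter.flip

/-- Sym(w): the complement of the mirror (reversal) of w. -/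
def sym (w : Word) : Word := comp w.reverse

/-- A palindrome: a word equal to its mirror. -/
def Palindrome (w : Word) : Prop := w.reverse = w

/-- w' is a conjugate of w: w = u·v and w' = v·u. -/
def Conj (w w' : Word) : Prop := ∃ u v : Word, w = u ++ v ∧ w' = v ++ u

/-- u is the principal prefix of w: the shortest prefix of w with δ(u) maximal. -/
def IsPrincipalPrefix (u w : Word) : Prop :=
  u <+: w ∧ (∀ p : Word, p <+: w → delta p ≤ delta u) ∧
    (∀ p : Word, p <+: w → delta p = delta u → u.length ≤ p.length)

/-- The graph of the map γ: writing w = u·v·b with u the principal prefix of w,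
    γ(w) = v̄·b·ū. -/
def GammaRel (w w' : Word) : Prop :=
  ∃ u v : Word, IsPrincipalPrefix u w ∧ w = u ++ v ++ [Letter.b] ∧
    w' = comp v ++ [Letter.b] ++ comp u

/-- F_n: the fixed points of γ in D_n. -/
def InF (n : ℕ) (w : Word) : Prop := InD n w ∧ GammaRel w w

/-- F_γ = ⋃_{n ≥ 1} F_n. -/
def InFgamma (w : Word) : Prop := ∃ n : ℕ, 1 ≤ n ∧ InF n w

/-- x^y: concatenation of the word x with itself y times. -/
def wpow (x : Word) : ℕ → Word
  | 0 => []
  | k + 1 => x ++ wpow x k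
/-- The words (u_i, w_i) built by GenGammaPath on input array t with degree n.
    When n is even the construction starts from a^{t₀}·b^{t₀} and the "a-rule"
    is used at even steps; when n is odd it starts from b^{t₀}·a^{t₀} and the
    "a-rule" is used at odd steps (i.e. exactly when i ≡ n (mod 2)). -/
def gen (n : ℕ) (t : ℕ → ℕ) : ℕ → Word × Word
  | 0 =>
    if n % 2 = 0 then
      (List.replicate (t 0 - 1) Letter.a,
       List.replicate (t 0) Letter.a ++ List.replicate (t 0) Letter.b)
    else
      (List.replicate (t 0 - 1) Letter.b,
       List.replicate (t 0) Letter.b ++ List.replicate (t 0) Letter.a)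
  | i + 1 =>
    let p := gen n t i
    if (i + 1) % 2 = n % 2 then
      let u' := sym p.1 ++ wpow ([Letter.a] ++ p.2) (t (i + 1))
      (u', u' ++ [Letter.a] ++ p.2 ++ [Letter.b] ++ sym u')
    else
      let u' := sym p.1 ++ wpow ([Letter.b] ++ p.2) (t (i + 1))
      (u', u' ++ [Letter.b] ++ p.2 ++ [Letter.a] ++ sym u')

section Helpers

@[simp] lemma Letter.flip_flip (y : Letter) : y.flip.flip = y := by cases y <;> rfl
@[simp] lemma beq_aa : (Letter.a == Letter.a) = true := rfl
@[simp] lemma beq_ab : (Letter.a == Letter.b) = false := rfl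
@[simp] lemma beq_ba : (Letter.b == Letter.a) = false := rfl
@[simp] lemma beq_bb : (Letter.b == Letter.b) = true := rfl
@[simp] lemma flip_a : Letter.a.flip = Letter.b := rfl
@[simp] lemma flip_b : Letter.b.flip = Letter.a := rfl

@[simp] lemma delta_nil : delta [] = 0 := by simp [delta]

lemma delta_append (u v : Word) : delta (u ++ v) = delta u + delta v := by
  simp [delta]; ring

@[simp] lemma delta_a : delta [Letter.a] = 1 := by decide
@[simp] lemma delta_b : delta [Letter.b] = -1 := by decide

@[simp] lemma comp_nil : comp [] = [] := rfl
lemma comp_append (u v : Word) : comp (u ++ v) = comp u ++ comp v := by simp [comp]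
@[simp] lemma comp_comp (w : Word) : comp (comp w) = w := by
  simp [comp, List.map_map]; rw [show Letter.flip ∘ Letter.flip = id by funext x; cases x <;> rfl]
  simp
@[simp] lemma comp_singleton (x : Letter) : comp [x] = [x.flip] := rfl

lemma count_comp_a (w : Word) : (comp w).count Letter.a = w.count Letter.b := by
  induction w with
  | nil => rfl
  | cons x l ih =>
    simp only [comp] at ih
    cases x <;> simp [comp, List.count_cons, ih]

lemma count_comp_b (w : Word) : (comp w).count Letter.b = w.count Letter.a := by
  induction w with
  | nil => rfl
  | cons x l ih =>
    simp only [comp] at ih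
    cases x <;> simp [comp, List.count_cons, ih]

lemma delta_comp (w : Word) : delta (comp w) = - delta w := by
  unfold delta; rw [count_comp_a, count_comp_b]; ring

lemma delta_reverse (w : Word) : delta w.reverse = delta w := by simp [delta]

lemma comp_reverse (w : Word) : comp w.reverse = (comp w).reverse := by
  simp [comp]

lemma sym_append (u v : Word) : sym (u ++ v) = sym v ++ sym u := by
  simp [sym, comp_append]

lemma delta_sym (w : Word) : delta (sym w) = - delta w := by
  simp [sym, delta_comp, delta_reverse]

@[simp] lemma sym_singleton (x : Letter) : sym [x] = [x.flip] := rfl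

lemma comp_replicate (n : ℕ) (x : Letter) :
    comp (List.replicate n x) = List.replicate n x.flip := by
  simp [comp]

lemma sym_replicate (n : ℕ) (x : Letter) :
    sym (List.replicate n x) = List.replicate n x.flip := by
  simp [sym, comp]

lemma wpow_succ' (x : Word) (t : ℕ) : wpow x (t + 1) = wpow x t ++ x := by
  induction t with
  | zero => simp [wpow]
  | succ t ih =>
    calc wpow x (t+1+1) = x ++ wpow x (t+1) := rfl
    _ = x ++ (wpow x t ++ x) := by rw [ih]
    _ = (x ++ wpow x t) ++ x := by rw [List.append_assoc]
    _ = wpow x (t+1) ++ x := rfl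

lemma delta_wpow (x : Word) (t : ℕ) : delta (wpow x t) = t * delta x := by
  induction t with
  | zero => simp [wpow]
  | succ t ih => rw [show wpow x (t+1) = x ++ wpow x t from rfl, delta_append, ih]; push_cast; ring

lemma reverse_wpow (x : Word) (t : ℕ) : (wpow x t).reverse = wpow x.reverse t := by
  induction t with
  | zero => simp [wpow]
  | succ t ih => rw [show wpow x (t+1) = x ++ wpow x t from rfl, wpow_succ']
                 simp [ih]

lemma shift_wpow {c s s' : Word} (h : c ++ s = s' ++ c) (t : ℕ) :
    c ++ wpow s t = wpow s' t ++ c := by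
  induction t with
  | zero => simp [wpow]
  | succ t ih =>
    rw [show wpow s (t+1) = s ++ wpow s t from rfl,
        show wpow s' (t+1) = s' ++ wpow s' t from rfl]
    rw [← List.append_assoc, h, List.append_assoc, ih, ← List.append_assoc]

lemma prefix_append_cases {p u v : Word} (h : p <+: u ++ v) :
    p <+: u ∨ ∃ q, q <+: v ∧ p = u ++ q := by
  obtain ⟨r, hr⟩ := h
  rcases List.append_eq_append_iff.mp hr.symm with ⟨a', ha1, ha2⟩ | ⟨c', hc1, hc2⟩
  · right; exact ⟨a', ⟨r, ha2.symm⟩, ha1⟩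
  · left; exact ⟨c', hc1.symm⟩

lemma prefix_cons_cases {p x : Word} {y : Letter} (h : p <+: [y] ++ x) :
    p = [] ∨ ∃ q, q <+: x ∧ p = [y] ++ q := by
  rcases p with _ | ⟨z, p⟩
  · left; rfl
  · right
    have h2 : z = y ∧ p <+: x := List.cons_prefix_cons.mp h
    exact ⟨p, h2.2, by rw [h2.1]; rfl⟩

lemma prefix_wpow {p x : Word} {t : ℕ} (h : p <+: wpow x t) :
    p = wpow x t ∨ ∃ k r, k < t ∧ r <+: x ∧ p = wpow x k ++ r := by
  induction t generalizing p with
  | zero => left; simpa [wpow] using List.prefix_nil.mp (by simpa [wpow] using h)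
  | succ t ih =>
    rcases prefix_append_cases (by simpa [show wpow x (t+1) = x ++ wpow x t from rfl] using h)
      with h1 | ⟨q, hq, rfl⟩
    · right; exact ⟨0, p, Nat.succ_pos t, h1, by simp [wpow]⟩
    · rcases ih hq with rfl | ⟨k, r, hk, hr, rfl⟩
      · left; rfl
      · right; exact ⟨k + 1, r, by omega, hr,
          by rw [show wpow x (k+1) = x ++ wpow x k from rfl]; simp [List.append_assoc]⟩

lemma prefix_comp {p u : Word} (h : p <+: comp u) : ∃ q, q <+: u ∧ p = comp q := by
  have h2 : comp p <+: comp (comp u) := h.map Letter.flip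
  rw [comp_comp] at h2
  exact ⟨comp p, h2, (comp_comp p).symm⟩

lemma prefix_replicate {p : Word} {n : ℕ} {x : Letter} (h : p <+: List.replicate n x) :
    p = List.replicate p.length x ∧ p.length ≤ n := by
  constructor
  · exact List.eq_replicate_length.mpr fun b hb =>
      List.eq_of_mem_replicate (h.subset hb)
  · simpa using h.length_le

lemma length_eq_counts (w : Word) :
    w.length = w.count Letter.a + w.count Letter.b := by
  induction w with
  | nil => rfl
  | cons x l ih => cases x <;> simp [List.count_cons, ih] <;> omega

def sg (y : Letter) : ℤ := - delta [y]
@[simp] lemma sg_a : sg Letter.a = -1 := rfl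
@[simp] lemma sg_b : sg Letter.b = 1 := rfl

end Helpers
lemma sym_sym (w : Word) : sym (sym w) = w := by
  simp [sym, ← comp_reverse]

lemma sg_flip (y : Letter) : sg y.flip = - sg y := by cases y <;> simp
lemma sg_sq (y : Letter) : sg y * sg y = 1 := by cases y <;> simp
lemma delta_letter (y : Letter) : delta [y] = - sg y := by cases y <;> simp
lemma delta_letter_flip (y : Letter) : delta [y.flip] = sg y := by cases y <;> simp

/-- The invariant carried through the GenGammaPath construction.
`y` is the letter that will be used in the *next* step. -/
structure GInv (y : Letter) (u w : Word) : Prop where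
  symw : sym w = w
  palu : u.reverse = u
  p2 : comp u ++ [y] ++ w = comp w ++ [y] ++ comp u
  du : 0 ≤ sg y * delta u
  hw : ∀ p, p <+: w → 0 ≤ sg y * delta p ∧ sg y * delta p ≤ sg y * delta u + 1
  hu : ∀ p, p <+: u → sg y * delta p ≤ sg y * delta u
  upre2 : u ++ [y.flip] <+: w
  len : 2 ≤ w.length

theorem GInv.step {y : Letter} {u w : Word} (h : GInv y u w) (t : ℕ) :
    GInv y.flip (sym u ++ wpow ([y] ++ w) t)
      ((sym u ++ wpow ([y] ++ w) t) ++ [y] ++ w ++ [y.flip]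
        ++ sym (sym u ++ wpow ([y] ++ w) t)) := by
  obtain ⟨symw, palu, p2, du, hw, hu, upre2, len⟩ := h
  set E := sg y with hE
  have he2 : E * E = 1 := sg_sq y
  have hdy : delta [y] = -E := delta_letter y
  have hdfy : delta [y.flip] = E := delta_letter_flip y
  have hsgf : sg y.flip = -E := sg_flip y
  have hdw : delta w = 0 := by
    have := delta_sym w; rw [symw] at this; linarith
  have hsymu : sym u = comp u := by rw [sym, palu]
  have hrevw : w.reverse = comp w := by
    have : comp (comp w.reverse) = comp w := by rw [show comp w.reverse = sym w from rfl, symw]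
    rwa [comp_comp] at this
  have hupw : u <+: w := (List.prefix_append u [y.flip]).trans upre2
  set s : Word := [y] ++ w with hs
  set U : Word := sym u ++ wpow s t with hUdef
  have hU : U = comp u ++ wpow s t := by rw [hUdef, hsymu]
  have hds : delta s = -E := by rw [hs, delta_append, hdy, hdw]; ring
  have hdU : delta U = -(delta u) - t * E := by
    rw [hU, delta_append, delta_comp, delta_wpow, hds]; ring
  have hEdU : -E * delta U = E * delta u + t := by
    rw [hdU]; linear_combination (t : ℤ) * he2
  have hconj : comp u ++ s = (comp w ++ [y]) ++ comp u := by
    rw [hs, ← List.append_assoc]; exact p2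
  have hshift : comp u ++ wpow s t = wpow (comp w ++ [y]) t ++ comp u :=
    shift_wpow hconj t
  have palU : U.reverse = U := by
    rw [hU, List.reverse_append, reverse_wpow, hs, List.reverse_append, hrevw,
        List.reverse_singleton, ← comp_reverse, palu, ← hshift]
  have hsymU : sym U = comp U := by rw [sym, palU]
  have hcsU : comp (sym U) = U := by rw [hsymU, comp_comp]
  -- prefix bounds for U
  have keyU : ∀ p, p <+: U → 0 ≤ -E * delta p ∧ -E * delta p ≤ -E * delta U := by
    intro p hp
    rw [hU] at hp
    rcases prefix_append_cases hp with h1 | ⟨q, hq, rfl⟩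
    · obtain ⟨q, hq, rfl⟩ := prefix_comp h1
      have h0 := (hw q (hq.trans hupw)).1
      have h1' := hu q hq
      have e1 : -E * delta (comp q) = E * delta q := by simp only [delta_comp]; ring
      rw [e1, hEdU]
      constructor <;> [linarith; linarith [(Nat.cast_nonneg t : (0:ℤ) ≤ t)]]
    · rcases prefix_wpow hq with rfl | ⟨k, r, hk, hr, rfl⟩
      · rw [← hU]; constructor <;> [rw [hEdU]; rfl]
        linarith [(Nat.cast_nonneg t : (0:ℤ) ≤ t)]
      · have hkt : (k : ℤ) + 1 ≤ t := by exact_mod_cast hk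
        rcases prefix_cons_cases hr with rfl | ⟨q', hq', rfl⟩
        · have e1 : -E * delta (comp u ++ (wpow s k ++ [])) = E * delta u + k := by
            rw [delta_append, delta_append, delta_comp, delta_wpow, hds, delta_nil]
            linear_combination (k : ℤ) * he2
          rw [e1, hEdU]
          constructor <;> linarith [(Nat.cast_nonneg k : (0:ℤ) ≤ k)]
        · obtain ⟨hq0, hq1⟩ := hw q' hq'
          have e1 : -E * delta (comp u ++ (wpow s k ++ ([y] ++ q')))
              = E * delta u + k + 1 - E * delta q' := by
            simp only [delta_append, delta_comp, delta_wpow, hds, hdy]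
            linear_combination ((k : ℤ) + 1) * he2
          rw [e1, hEdU]
          constructor <;> linarith [(Nat.cast_nonneg k : (0:ℤ) ≤ k)]
  have hdUnn : 0 ≤ -E * delta U := by rw [hEdU]; linarith [(Nat.cast_nonneg t : (0:ℤ) ≤ t)]
  -- P3
  have hp3 : U ++ ([y] ++ w) = (comp w ++ [y]) ++ U := by
    calc U ++ ([y] ++ w) = comp u ++ (wpow s t ++ s) := by rw [hU, List.append_assoc, hs]
    _ = comp u ++ wpow s (t + 1) := by rw [← wpow_succ']
    _ = wpow (comp w ++ [y]) (t + 1) ++ comp u := shift_wpow hconj (t + 1)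
    _ = (comp w ++ [y]) ++ (wpow (comp w ++ [y]) t ++ comp u) := by
          rw [show wpow (comp w ++ [y]) (t+1) = (comp w ++ [y]) ++ wpow (comp w ++ [y]) t from rfl,
              List.append_assoc]
    _ = (comp w ++ [y]) ++ U := by rw [← hshift, ← hU]
  constructor
  -- symw'
  · have hscU : sym (comp U) = U := by
      rw [sym, ← comp_reverse, comp_comp, palU]
    simp only [sym_append, sym_singleton, sym_sym, symw, Letter.flip_flip, List.append_assoc,
      hsymU, hscU]
  -- palu'
  · exact palU
  -- p2'
  · rw [hsymU]
    have key : U ++ ([y] ++ (w ++ ([y.flip] ++ comp U)))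
        = comp w ++ ([y] ++ (U ++ ([y.flip] ++ comp U))) := by
      have h := congrArg (fun z => z ++ ([y.flip] ++ comp U)) hp3
      simpa [List.append_assoc] using h
    simp only [comp_append, comp_singleton, comp_comp, Letter.flip_flip, List.append_assoc]
    rw [key]
  -- du'
  · rw [hsgf]; exact hdUnn
  -- hw'
  · intro p hp
    rw [hsgf]
    rcases prefix_append_cases (by simpa [List.append_assoc] using hp) with h1 | ⟨q, hq, rfl⟩
    · obtain ⟨l, r⟩ := keyU p h1
      constructor <;> linarith
    · rcases prefix_cons_cases hq with rfl | ⟨q2, hq2, rfl⟩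
      · simp only [List.append_nil]
        obtain ⟨l, r⟩ := keyU U (List.prefix_refl U)
        constructor <;> linarith
      · rcases prefix_append_cases hq2 with h2 | ⟨q3, hq3, rfl⟩
        · obtain ⟨hq0, hq1⟩ := hw q2 h2
          have e1 : -E * delta (U ++ ([y] ++ q2)) = -E * delta U + 1 - E * delta q2 := by
            simp only [delta_append, hdy]
            linear_combination he2
          rw [e1, hEdU]
          constructor <;> linarith
        · rcases prefix_cons_cases hq3 with rfl | ⟨q4, hq4, rfl⟩
          · simp only [List.append_nil]
            have e1 : -E * delta (U ++ ([y] ++ w)) = -E * delta U + 1 := by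
              simp only [delta_append, hdy, hdw]
              linear_combination he2
            rw [e1, hEdU]
            constructor <;> linarith
          · rw [palU] at hq4
            obtain ⟨q5, hq5, rfl⟩ := prefix_comp hq4
            obtain ⟨l5, u5⟩ := keyU q5 hq5
            have e1 : -E * delta (U ++ ([y] ++ (w ++ ([y.flip] ++ comp q5))))
                = -E * delta U + E * delta q5 := by
              simp only [delta_append, hdy, hdfy, hdw, delta_comp]
              ring
            rw [e1, hEdU]
            constructor <;> [nlinarith; nlinarith]
  -- hu'
  · intro p hp
    rw [hsgf]
    exact (keyU p hp).2
  -- upre2'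
  · rw [Letter.flip_flip]
    exact ⟨w ++ [y.flip] ++ sym U, by simp [List.append_assoc]⟩
  -- len'
  · simp only [List.length_append]
    omega
lemma delta_replicate (k : ℕ) (x : Letter) :
    delta (List.replicate k x) = k * delta [x] := by
  induction k with
  | zero => simp
  | succ k ih =>
    rw [List.replicate_succ,
        show (x :: List.replicate k x : Word) = [x] ++ List.replicate k x from rfl,
        delta_append, ih]
    push_cast; ring

theorem GInv.base (z : Letter) {t : ℕ} (ht : 0 < t) :
    GInv z.flip (List.replicate (t-1) z)
      (List.replicate t z ++ List.replicate t z.flip) := by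
  obtain ⟨k, rfl⟩ : ∃ k, t = k + 1 := ⟨t - 1, by omega⟩
  have hsucc : ∀ (m : ℕ) (x : Letter),
      List.replicate m x ++ [x] = List.replicate (m+1) x := by
    intro m x
    rw [List.replicate_succ']
  simp only [Nat.add_sub_cancel]
  constructor
  · simp [sym_append, sym_replicate]
  · simp [List.reverse_replicate]
  · simp only [comp_append, comp_replicate, Letter.flip_flip]
    have e2 : ([z.flip] ++ List.replicate k z.flip : Word) = List.replicate (k+1) z.flip := by
      simp [List.replicate_succ]
    rw [hsucc k z.flip]
    simp only [List.append_assoc]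
    rw [e2]
  · cases z <;> simp [delta_replicate] <;> positivity
  · intro p hp
    rcases prefix_append_cases hp with h1 | ⟨q, hq, rfl⟩
    · obtain ⟨hrep, hlen⟩ := prefix_replicate h1
      rw [hrep, delta_replicate, delta_replicate]
      cases z <;> simp <;> omega
    · obtain ⟨hrep, hlen⟩ := prefix_replicate hq
      rw [hrep, delta_append, delta_replicate, delta_replicate, delta_replicate]
      cases z <;> simp <;> omega
  · intro p hp
    obtain ⟨hrep, hlen⟩ := prefix_replicate hp
    rw [hrep, delta_replicate, delta_replicate]
    cases z <;> simp <;> omega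
  · rw [Letter.flip_flip, hsucc]
    exact List.prefix_append _ _
  · simp; omega

lemma gen_inv (n : ℕ) (t : ℕ → ℕ) (ht : 0 < t 0) :
    ∀ i, GInv (if (i+1) % 2 = n % 2 then Letter.a else Letter.b)
      (gen n t i).1 (gen n t i).2 := by
  intro i
  induction i with
  | zero =>
    by_cases h : n % 2 = 0
    · have h1 : ¬((0+1) % 2 = n % 2) := by omega
      rw [if_neg h1]
      have hb := GInv.base Letter.a ht
      simp only [gen, if_pos h]
      exact hb
    · have h1 : (0+1) % 2 = n % 2 := by omega
      rw [if_pos h1]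
      have hb := GInv.base Letter.b ht
      simp only [gen, if_neg h]
      exact hb
  | succ i ih =>
    by_cases h : (i+1) % 2 = n % 2
    · have h2 : ¬((i+1+1) % 2 = n % 2) := by omega
      rw [if_neg h2]
      rw [if_pos h] at ih
      simp only [gen, if_pos h]
      exact ih.step (t (i+1))
    · have h2 : (i+1+1) % 2 = n % 2 := by omega
      rw [if_pos h2]
      rw [if_neg h] at ih
      simp only [gen, if_neg h]
      exact ih.step (t (i+1))
/-- Soundness of GenGammaPath: for every degree n and input array t with
    t₀ > 0, the output word w_n is a Dyck word and w_n·b is a fixed point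
    of γ, i.e. w_n·b ∈ F_γ. -/
theorem genGammaPath_sound (n : ℕ) (t : ℕ → ℕ) (ht : 0 < t 0) :
    IsDyck (gen n t n).2 ∧ InFgamma ((gen n t n).2 ++ [Letter.b]) := by
  have key := gen_inv n t ht n
  have hy : (if (n+1) % 2 = n % 2 then Letter.a else Letter.b) = Letter.b := by
    rw [if_neg]; omega
  rw [hy] at key
  obtain ⟨symw, palu, p2, du, hw, hu, upre2, len⟩ := key
  set u := (gen n t n).1 with hu0
  set w := (gen n t n).2 with hw0
  simp only [sg_b, one_mul, flip_b] at du hw hu upre2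
  have hdw : delta w = 0 := by
    have := delta_sym w; rw [symw] at this; linarith
  have hdyck : IsDyck w := ⟨hdw, fun p hp => (hw p hp).1⟩
  refine ⟨hdyck, ?_⟩
  -- counts
  have hcount : w.count Letter.a = w.count Letter.b := by
    have := hdw; unfold delta at this; omega
  have hlen2 : w.length = 2 * w.count Letter.a := by
    rw [length_eq_counts, hcount]; omega
  obtain ⟨v, hv⟩ := upre2
  refine ⟨w.count Letter.a, ?_, ⟨w, hdyck, hlen2, rfl⟩, ?_⟩
  · have := len; omega
  · -- GammaRel (w ++ [b]) (w ++ [b])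
    refine ⟨u ++ [Letter.a], v, ⟨?_, ?_, ?_⟩, ?_, ?_⟩
    · have hpref : u ++ [Letter.a] <+: w := ⟨v, hv⟩
      exact hpref.trans (List.prefix_append w [Letter.b])
    · intro p hp
      rw [delta_append, delta_a]
      rcases prefix_append_cases hp with h1 | ⟨q, hq, rfl⟩
      · linarith [(hw p h1).2]
      · rcases prefix_cons_cases hq with rfl | ⟨q2, hq2, rfl⟩
        · simp only [List.append_nil, hdw]; linarith
        · rw [List.prefix_nil.mp hq2]
          rw [delta_append, delta_append, hdw, delta_b, delta_nil]
          linarith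
    · intro p hp hdp
      by_contra hcon
      push_neg at hcon
      have hlp : p.length ≤ u.length := by
        simp only [List.length_append, List.length_singleton] at hcon; omega
      have hpu : p <+: u := by
        refine List.prefix_of_prefix_length_le hp ?_ hlp
        exact ((List.prefix_append u [Letter.a]).trans ⟨v, hv⟩).trans
          (List.prefix_append w [Letter.b])
      have := hu p hpu
      rw [hdp, delta_append, delta_a] at this
      linarith
    · rw [← hv]
    · -- fixed point equation
      have h := p2
      rw [← hv] at h
      simp only [comp_append, comp_singleton, flip_a, List.append_assoc] at h
      have h2 := List.append_cancel_left h
      have h3 := List.append_cancel_left h2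
      -- h3 : u ++ ([a] ++ v) = comp v ++ ([b] ++ comp u)
      calc w ++ [Letter.b] = (u ++ ([Letter.a] ++ v)) ++ [Letter.b] := by
            rw [← hv]; simp [List.append_assoc]
      _ = (comp v ++ ([Letter.b] ++ comp u)) ++ [Letter.b] := by rw [h3]
      _ = comp v ++ [Letter.b] ++ comp (u ++ [Letter.a]) := by
            simp [comp_append, List.append_assoc]
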